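/- For every shape parameter λ > 0 and every x > 0, the Mills ratio of the skew normal distribution satisfies the lower bound (1 - F_λ(x)) / f_λ(x) > x^{-1} (1 + x^{-2})^{-1}. -/

import Mathlib

/-!
Put `G(t) = 1 - F_λ(t) - t / (1 + t²) · f_λ(t)` (`snMillsGap`), so that the claim reads
`G(x) > 0`. Since `φ' = -t φ`, one finds
`G'(t) = -2 f_λ(t) / (1 + t²)² - 2 λ t φ(t) φ(λ t) / (1 + t²)`, which is negative for `t > 0`
when `λ ≥ 0`. Moreover `G(t) → 0`: `f_λ ≤ 2 φ`, and `F_λ(t) → 1` because substituting `x ↦ -x`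
gives `∫ 2 φ(x) Φ(λ x) dx = ∫ φ(x) (Φ(λ x) + Φ(-λ x)) dx = 1`. A strictly decreasing function
with limit `0` at infinity is positive.
-/

open Real MeasureTheory Filter Topology

/-- Standard normal density. -/
noncomputable def stdPhi (x : ℝ) : ℝ := (Real.sqrt (2 * Real.pi))⁻¹ * Real.exp (-(x ^ 2) / 2)

/-- Standard normal cdf. -/
noncomputable def stdCdf (x : ℝ) : ℝ := ∫ t in Set.Iic x, stdPhi t

/-- Skew normal density with shape parameter l. -/
noncomputable def snPdf (l x : ℝ) : ℝ := 2 * stdPhi x * stdCdf (l * x)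

/-- Skew normal cdf with shape parameter l. -/
noncomputable def snCdf (l x : ℝ) : ℝ := ∫ t in Set.Iic x, snPdf l t

/-- Gumbel extreme value distribution function. -/
noncomputable def gumbel (x : ℝ) : ℝ := Real.exp (-Real.exp (-x))

open Set ProbabilityTheory

lemma lt_of_strictAntiOn_Ici_of_tendsto_atTop {α β : Type*} [LinearOrder α] [NoMaxOrder α]
    [TopologicalSpace β] [Preorder β] [OrderClosedTopology β] {f : α → β} {x : α} {b : β}
    (hf : StrictAntiOn f (Ici x)) (hlim : Tendsto f atTop (𝓝 b)) : b < f x := by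
  have : Nonempty α := ⟨x⟩
  obtain ⟨y, hxy⟩ := exists_gt x
  have hby : b ≤ f y := le_of_tendsto hlim <| by
    filter_upwards [eventually_ge_atTop y] with z hyz
    exact hf.antitoneOn (mem_Ici.2 hxy.le) (mem_Ici.2 (hxy.le.trans hyz)) hyz
  exact hby.trans_lt (hf self_mem_Ici (mem_Ici.2 hxy.le) hxy)

section IntegralIic

variable {E : Type*} [NormedAddCommGroup E] [NormedSpace ℝ E] {f : ℝ → E}

lemma hasDerivAt_integral_Iic [CompleteSpace E] (hf : Continuous f) (hfi : Integrable f)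
    (x : ℝ) : HasDerivAt (fun y => ∫ t in Iic y, f t) (f x) x := by
  have hsplit :
      (fun y => ∫ t in Iic y, f t) = fun y => (∫ t in Iic 0, f t) + ∫ t in 0..y, f t := by
    funext y
    rw [← intervalIntegral.integral_Iic_sub_Iic hfi.integrableOn hfi.integrableOn,
      add_sub_cancel]
  rw [hsplit]
  exact (intervalIntegral.integral_hasDerivAt_right hfi.intervalIntegrable
    hf.stronglyMeasurable.stronglyMeasurableAtFilter hf.continuousAt).const_add _

lemma tendsto_integral_Iic_atTop (hfi : Integrable f) :
    Tendsto (fun y => ∫ t in Iic y, f t) atTop (𝓝 (∫ t, f t)) :=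
  (aecover_Iic tendsto_id).integral_tendsto_of_countably_generated hfi

end IntegralIic

lemma integral_two_mul_mul_comp_odd {p G w : ℝ → ℝ} (hp : ∀ x, p (-x) = p x)
    (hw : ∀ x, w (-x) = -w x) (hG : ∀ y, G y + G (-y) = 1)
    (hint : Integrable fun x => p x * G (w x)) :
    ∫ x, 2 * p x * G (w x) = ∫ x, p x := by
  have hint' : Integrable fun x => p x * G (-w x) := by
    simpa only [hp, hw] using hint.comp_neg
  have hflip : ∫ x, p x * G (-w x) = ∫ x, p x * G (w x) := by
    rw [← integral_neg_eq_self (fun x => p x * G (w x))]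
    simp only [hp, hw]
  calc ∫ x, 2 * p x * G (w x) = (∫ x, p x * G (w x)) + ∫ x, p x * G (-w x) := by
        rw [hflip, ← integral_add hint hint]
        simp only [two_mul, add_mul]
    _ = ∫ x, p x := by
        rw [← integral_add hint hint']
        simp only [← mul_add, hG, mul_one]

section StandardNormal

lemma stdPhi_eq_gaussianPDFReal : stdPhi = gaussianPDFReal 0 1 := by
  ext x
  simp [stdPhi, gaussianPDFReal]

lemma stdPhi_pos (x : ℝ) : 0 < stdPhi x :=
  stdPhi_eq_gaussianPDFReal ▸ gaussianPDFReal_pos 0 1 x one_ne_zero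

@[fun_prop]
lemma continuous_stdPhi : Continuous stdPhi := by
  unfold stdPhi
  fun_prop

lemma integrable_stdPhi : Integrable stdPhi :=
  stdPhi_eq_gaussianPDFReal ▸ integrable_gaussianPDFReal 0 1

lemma integral_stdPhi : ∫ x, stdPhi x = 1 :=
  stdPhi_eq_gaussianPDFReal ▸ integral_gaussianPDFReal_eq_one 0 one_ne_zero

lemma stdPhi_neg (x : ℝ) : stdPhi (-x) = stdPhi x := by
  simp only [stdPhi, neg_sq]

lemma hasDerivAt_stdPhi (x : ℝ) : HasDerivAt stdPhi (-x * stdPhi x) x := by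
  have hexp : HasDerivAt (fun y : ℝ => -(y ^ 2) / 2) (-x) x :=
    ((hasDerivAt_pow 2 x).neg.div_const 2).congr_deriv (by norm_num; ring)
  exact (hexp.exp.const_mul (√(2 * π))⁻¹).congr_deriv (by simp only [stdPhi]; ring)

lemma tendsto_stdPhi_atTop : Tendsto stdPhi atTop (𝓝 0) := by
  have hexponent : Tendsto (fun x : ℝ => -(x ^ 2) / 2) atTop atBot :=
    (tendsto_neg_atTop_atBot.comp (tendsto_pow_atTop two_ne_zero)).atBot_div_const two_pos
  unfold stdPhi
  simpa only [Function.comp_def, mul_zero] using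
    (tendsto_exp_atBot.comp hexponent).const_mul (√(2 * π))⁻¹

lemma hasDerivAt_stdCdf (x : ℝ) : HasDerivAt stdCdf (stdPhi x) x :=
  hasDerivAt_integral_Iic continuous_stdPhi integrable_stdPhi x

@[fun_prop]
lemma continuous_stdCdf : Continuous stdCdf :=
  continuous_iff_continuousAt.2 fun x => (hasDerivAt_stdCdf x).continuousAt

lemma stdCdf_pos (x : ℝ) : 0 < stdCdf x := by
  rw [stdCdf, setIntegral_pos_iff_support_of_nonneg_ae
    (ae_of_all _ fun t => (stdPhi_pos t).le) integrable_stdPhi.integrableOn,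
    Function.support_eq_univ fun t => (stdPhi_pos t).ne', univ_inter, volume_Iic]
  exact ENNReal.zero_lt_top

lemma stdCdf_le_one (x : ℝ) : stdCdf x ≤ 1 :=
  integral_stdPhi ▸ setIntegral_le_integral integrable_stdPhi
    (ae_of_all _ fun t => (stdPhi_pos t).le)

lemma stdCdf_add_stdCdf_neg (x : ℝ) : stdCdf x + stdCdf (-x) = 1 := by
  have hneg : stdCdf (-x) = ∫ t in Ioi x, stdPhi t := by
    rw [stdCdf, ← neg_neg x, ← integral_comp_neg_Iic, neg_neg]
    simp only [stdPhi_neg]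
  rw [hneg, stdCdf, intervalIntegral.integral_Iic_add_Ioi integrable_stdPhi.integrableOn
    integrable_stdPhi.integrableOn, integral_stdPhi]

end StandardNormal

section SkewNormal

variable (l : ℝ)

lemma snPdf_pos (x : ℝ) : 0 < snPdf l x := by
  have := stdPhi_pos x
  have := stdCdf_pos (l * x)
  unfold snPdf
  positivity

lemma snPdf_le_two_mul_stdPhi (x : ℝ) : snPdf l x ≤ 2 * stdPhi x :=
  mul_le_of_le_one_right (by linarith [stdPhi_pos x]) (stdCdf_le_one (l * x))

lemma continuous_snPdf : Continuous (snPdf l) := by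
  unfold snPdf
  fun_prop

lemma integrable_stdPhi_mul_stdCdf : Integrable fun x => stdPhi x * stdCdf (l * x) := by
  refine integrable_stdPhi.mul_bdd (c := 1) (by fun_prop : Continuous _).aestronglyMeasurable
    (ae_of_all _ fun x => ?_)
  rw [norm_of_nonneg (stdCdf_pos _).le]
  exact stdCdf_le_one _

lemma integrable_snPdf : Integrable (snPdf l) :=
  ((integrable_stdPhi_mul_stdCdf l).const_mul 2).congr
    (ae_of_all _ fun _ => (mul_assoc _ _ _).symm)

lemma integral_snPdf : ∫ x, snPdf l x = 1 :=
  integral_stdPhi ▸ integral_two_mul_mul_comp_odd stdPhi_neg (fun x => mul_neg l x)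
    stdCdf_add_stdCdf_neg (integrable_stdPhi_mul_stdCdf l)

lemma hasDerivAt_snCdf (x : ℝ) : HasDerivAt (snCdf l) (snPdf l x) x :=
  hasDerivAt_integral_Iic (continuous_snPdf l) (integrable_snPdf l) x

lemma tendsto_snCdf_atTop : Tendsto (snCdf l) atTop (𝓝 1) :=
  integral_snPdf l ▸ tendsto_integral_Iic_atTop (integrable_snPdf l)

lemma tendsto_snPdf_atTop : Tendsto (snPdf l) atTop (𝓝 0) :=
  squeeze_zero (fun x => (snPdf_pos l x).le) (snPdf_le_two_mul_stdPhi l) <| by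
    simpa only [mul_zero] using tendsto_stdPhi_atTop.const_mul 2

lemma hasDerivAt_snPdf (x : ℝ) :
    HasDerivAt (snPdf l) (-x * snPdf l x + 2 * l * stdPhi x * stdPhi (l * x)) x := by
  have hlin : HasDerivAt (fun y => l * y) l x := by
    simpa using (hasDerivAt_id x).const_mul l
  have hcdf := (hasDerivAt_stdCdf (l * x)).comp x hlin
  exact (((hasDerivAt_stdPhi x).const_mul 2).mul hcdf).congr_deriv
    (by simp only [snPdf, Function.comp_apply]; ring)

end SkewNormal

noncomputable def snMillsGap (l t : ℝ) : ℝ := 1 - snCdf l t - t / (1 + t ^ 2) * snPdf l t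

lemma hasDerivAt_snMillsGap (l t : ℝ) :
    HasDerivAt (snMillsGap l)
      (-(2 * snPdf l t / (1 + t ^ 2) ^ 2
        + 2 * l * t * stdPhi t * stdPhi (l * t) / (1 + t ^ 2))) t := by
  have hden : HasDerivAt (fun y : ℝ => 1 + y ^ 2) (2 * t) t := by
    simpa using (hasDerivAt_pow 2 t).const_add 1
  have hweight := (hasDerivAt_id t).div hden (by positivity)
  have hgap := ((hasDerivAt_snCdf l t).const_sub 1).sub (hweight.mul (hasDerivAt_snPdf l t))
  refine hgap.congr_deriv ?_
  simp only [Pi.div_apply, id_eq]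
  field_simp
  ring

lemma snMillsGap_strictAntiOn {l : ℝ} (hl : 0 ≤ l) : StrictAntiOn (snMillsGap l) (Ici 0) := by
  refine strictAntiOn_of_hasDerivWithinAt_neg (convex_Ici 0)
    (fun t _ => (hasDerivAt_snMillsGap l t).continuousAt.continuousWithinAt)
    (fun t _ => (hasDerivAt_snMillsGap l t).hasDerivWithinAt) fun t ht => ?_
  rw [interior_Ici, mem_Ioi] at ht
  have := snPdf_pos l t
  have := stdPhi_pos t
  have := stdPhi_pos (l * t)
  exact neg_neg_of_pos (add_pos_of_pos_of_nonneg (by positivity) (by positivity))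

lemma tendsto_snMillsGap_atTop (l : ℝ) : Tendsto (snMillsGap l) atTop (𝓝 0) := by
  have hweight : IsBoundedUnder (· ≤ ·) atTop fun t : ℝ => ‖t / (1 + t ^ 2)‖ := by
    refine isBoundedUnder_of ⟨1, fun t => ?_⟩
    rw [norm_div, norm_of_nonneg (by positivity : (0 : ℝ) ≤ 1 + t ^ 2), Real.norm_eq_abs]
    exact div_le_one_of_le₀ (by nlinarith [abs_nonneg t, sq_abs t]) (by positivity)
  have htail := (tendsto_snCdf_atTop l).const_sub 1
  have hterm := (tendsto_snPdf_atTop l).zero_mul_isBoundedUnder_le hweight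
  have hgap := htail.sub hterm
  rw [sub_self, sub_zero] at hgap
  exact hgap.congr fun t => by rw [snMillsGap, mul_comm (snPdf l t)]

lemma snMillsGap_pos {l x : ℝ} (hl : 0 ≤ l) (hx : 0 ≤ x) : 0 < snMillsGap l x :=
  lt_of_strictAntiOn_Ici_of_tendsto_atTop
    ((snMillsGap_strictAntiOn hl).mono (Ici_subset_Ici.2 hx)) (tendsto_snMillsGap_atTop l)

theorem skew_normal_mills_lower_pos (l : ℝ) (hl : 0 < l) (x : ℝ) (hx : 0 < x) :
    x⁻¹ * (1 + (x ^ 2)⁻¹)⁻¹ < (1 - snCdf l x) / snPdf l x := by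
  have hlhs : x⁻¹ * (1 + (x ^ 2)⁻¹)⁻¹ = x / (1 + x ^ 2) := by
    field_simp
    ring
  have hgap := snMillsGap_pos hl.le hx.le
  rw [snMillsGap] at hgap
  rw [hlhs, lt_div_iff₀ (snPdf_pos l x)]
  linarith
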